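/- Let G' be constructed from a graph G as follows: a terminal vertex s; a vertex v' for each v ∈ V(G) adjacent to s; a vertex e' for each e ∈ E(G) adjacent to u' and v' where e = uv. If G has a clique K of size k, then X = {s} ∪ {v' : v ∉ K} ∪ {e' : e ⊄ K} satisfies s ∈ X, |X| = n − k + m − C(k,2) + 1, and N_{G'}(X) = {v' : v ∈ K}, so |N_{G'}(X)| = k. -/
import Mathlib


open SimpleGraph

/-- Open neighborhood of a vertex set: vertices outside `X` adjacent to some vertex of `X`. -/
def vb {V : Type*} (G : SimpleGraph V) (X : Set V) : Set V :=
  {v | v ∉ X ∧ ∃ u ∈ X, G.Adj u v}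

/-- Vertices reachable from the set `X` in `G - S`. -/
def reachAvoid {V : Type*} (G : SimpleGraph V) (S X : Set V) : Set V :=
  {v | ∃ x ∈ X, ∃ p : G.Walk x v, ∀ w ∈ p.support, w ∉ S}

/-- `S` is a vertex `(X,Y)`-separator. -/
def isSep {V : Type*} (G : SimpleGraph V) (X Y S : Set V) : Prop :=
  S ⊆ (X ∪ Y)ᶜ ∧ ∀ y ∈ Y, y ∉ reachAvoid G S X

/-- `S` is an important `(X,Y)`-separator. -/
def isImpSep {V : Type*} (G : SimpleGraph V) (X Y S : Set V) : Prop :=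
  isSep G X Y S ∧ (∀ S' ⊂ S, ¬ isSep G X Y S') ∧
    ¬ ∃ T, isSep G X Y T ∧ T.ncard ≤ S.ncard ∧ reachAvoid G S X ⊂ reachAvoid G T X

/-- Edge boundary of a vertex set. -/
def edgeBoundary {V : Type*} (G : SimpleGraph V) (X : Set V) : Set (Sym2 V) :=
  {e | ∃ a b, e = s(a, b) ∧ G.Adj a b ∧ a ∈ X ∧ b ∉ X}

/-- The terminal construction `G'`: a terminal `s`, a vertex `v'` for each vertex of `G`
adjacent to `s`, and a vertex `e'` for each edge of `G` adjacent to the endpoints of `e`. -/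
def terminalCutGraph {V : Type*} (G : SimpleGraph V) :
    SimpleGraph (Unit ⊕ V ⊕ G.edgeSet) :=
  SimpleGraph.fromRel (fun x y =>
    match x, y with
    | Sum.inl _, Sum.inr (Sum.inl _) => True
    | Sum.inr (Sum.inl v), Sum.inr (Sum.inr e) => v ∈ (e : Sym2 V)
    | _, _ => False)


lemma aux_clique_card {V : Type*} [Fintype V] [DecidableEq V]
    (G : SimpleGraph V) [DecidableRel G.Adj] (k : ℕ) (K : Finset V)
    (hK : G.IsNClique k K) :
    {e : G.edgeSet | ∀ v ∈ (e : Sym2 V), v ∈ K}.ncard = k.choose 2 := by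
  have h1 : Subtype.val '' {e : G.edgeSet | ∀ v ∈ (e : Sym2 V), v ∈ K}
      = {e : Sym2 V | e ∈ G.edgeSet ∧ ∀ v ∈ e, v ∈ K} := by
    ext e; constructor
    · rintro ⟨⟨e, he⟩, hP, rfl⟩; exact ⟨he, hP⟩
    · rintro ⟨he, hP⟩; exact ⟨⟨e, he⟩, hP, rfl⟩
  have h2 : (Sym2.map (Subtype.val : ↥K → V)) '' {p : Sym2 ↥K | ¬ p.IsDiag}
      = {e : Sym2 V | e ∈ G.edgeSet ∧ ∀ v ∈ e, v ∈ K} := by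
    ext e; constructor
    · rintro ⟨p, hp, rfl⟩
      induction p with
      | _ a b =>
        rw [Set.mem_setOf_eq, Sym2.mk_isDiag_iff] at hp
        refine ⟨?_, ?_⟩
        · rw [Sym2.map_pair_eq, mem_edgeSet]
          exact hK.1 a.2 b.2 (fun h => hp (Subtype.ext h))
        · intro v hv
          rw [Sym2.map_pair_eq, Sym2.mem_iff] at hv
          rcases hv with rfl | rfl
          · exact a.2
          · exact b.2
    · rintro ⟨he, hmem⟩
      induction e with
      | _ a b =>
        rw [mem_edgeSet] at he
        have ha : a ∈ K := hmem a (Sym2.mem_mk_left a b)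
        have hb : b ∈ K := hmem b (Sym2.mem_mk_right a b)
        refine ⟨s(⟨a, ha⟩, ⟨b, hb⟩), ?_, by rw [Sym2.map_pair_eq]⟩
        rw [Set.mem_setOf_eq, Sym2.mk_isDiag_iff]
        exact fun h => he.ne (congrArg Subtype.val h)
  have hinj : Function.Injective (Sym2.map (Subtype.val : ↥K → V)) :=
    Sym2.map.injective Subtype.val_injective
  have := Set.ncard_image_of_injective {e : G.edgeSet | ∀ v ∈ (e : Sym2 V), v ∈ K}
    (Subtype.val_injective)
  rw [h1, ← h2, Set.ncard_image_of_injective _ hinj] at this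
  rw [← this, ← Nat.card_coe_set_eq, Nat.card_eq_fintype_card]
  have : Fintype.card {p : Sym2 ↥K | ¬ p.IsDiag} = Fintype.card {p : Sym2 ↥K // ¬ p.IsDiag} := by
    apply Fintype.card_congr; rfl
  rw [this, Sym2.card_subtype_not_diag, Fintype.card_coe, hK.2]

/-- If `G` has a `k`-clique `K`, then the set consisting of the terminal, the vertices not
in `K` and the edges not inside `K` is a solution for the terminal problem. -/
theorem clique_gives_terminal_cut {V : Type*} [Fintype V] [DecidableEq V]
    (G : SimpleGraph V) [DecidableRel G.Adj] (n m k : ℕ)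
    (hn : Fintype.card V = n) (hm : G.edgeSet.ncard = m)
    (K : Finset V) (hK : G.IsNClique k K) :
    let X : Set (Unit ⊕ V ⊕ G.edgeSet) :=
      {x | x = Sum.inl () ∨ (∃ v, x = Sum.inr (Sum.inl v) ∧ v ∉ K) ∨
        (∃ e : G.edgeSet, x = Sum.inr (Sum.inr e) ∧ ¬ ∀ v ∈ (e : Sym2 V), v ∈ K)}
    Sum.inl () ∈ X ∧ X.ncard = n - k + (m - k.choose 2) + 1 ∧
      vb (terminalCutGraph G) X = {x | ∃ v ∈ K, x = Sum.inr (Sum.inl v)} ∧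
      (vb (terminalCutGraph G) X).ncard = k := by
  
  intro X
  have hXmem : ∀ x, x ∈ X ↔ (x = Sum.inl () ∨ (∃ v, x = Sum.inr (Sum.inl v) ∧ v ∉ K) ∨
        (∃ e : G.edgeSet, x = Sum.inr (Sum.inr e) ∧ ¬ ∀ v ∈ (e : Sym2 V), v ∈ K)) :=
    fun x => Iff.rfl
  have hcard : X.ncard = n - k + (m - k.choose 2) + 1 := by
    have hXeq : X = ({Sum.inl ()} : Set (Unit ⊕ V ⊕ G.edgeSet)) ∪
        ((fun v => Sum.inr (Sum.inl v)) '' ((↑K : Set V)ᶜ)) ∪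
        ((fun e => Sum.inr (Sum.inr e)) '' {e : G.edgeSet | ¬ ∀ v ∈ (e : Sym2 V), v ∈ K}) := by
      ext x
      rw [hXmem]
      simp only [Set.mem_union, Set.mem_singleton_iff, Set.mem_image, Set.mem_compl_iff,
        Set.mem_setOf_eq, Finset.mem_coe]
      constructor
      · rintro (h | ⟨v, rfl, hv⟩ | ⟨e, rfl, he⟩)
        · exact Or.inl (Or.inl h)
        · exact Or.inl (Or.inr ⟨v, hv, rfl⟩)
        · exact Or.inr ⟨e, he, rfl⟩
      · rintro ((h | ⟨v, hv, rfl⟩) | ⟨e, he, rfl⟩)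
        · exact Or.inl h
        · exact Or.inr (Or.inl ⟨v, rfl, hv⟩)
        · exact Or.inr (Or.inr ⟨e, rfl, he⟩)
    have hinjv : Function.Injective (fun v : V => (Sum.inr (Sum.inl v) : Unit ⊕ V ⊕ G.edgeSet)) := by
      intro a b h; simpa using h
    have hinje : Function.Injective (fun e : G.edgeSet => (Sum.inr (Sum.inr e) : Unit ⊕ V ⊕ G.edgeSet)) := by
      intro a b h; simpa using h
    have hBcard : ((fun v => Sum.inr (Sum.inl v)) '' ((↑K : Set V)ᶜ) : Set (Unit ⊕ V ⊕ G.edgeSet)).ncard = n - k := by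
      rw [Set.ncard_image_of_injective _ hinjv]
      have h1 := Set.ncard_add_ncard_compl (↑K : Set V)
      rw [Set.ncard_coe_finset, hK.2, Nat.card_eq_fintype_card, hn] at h1
      omega
    have hCcard : ((fun e => Sum.inr (Sum.inr e)) '' {e : G.edgeSet | ¬ ∀ v ∈ (e : Sym2 V), v ∈ K} : Set (Unit ⊕ V ⊕ G.edgeSet)).ncard = m - k.choose 2 := by
      rw [Set.ncard_image_of_injective _ hinje]
      have heq : {e : G.edgeSet | ¬ ∀ v ∈ (e : Sym2 V), v ∈ K} =
          {e : G.edgeSet | ∀ v ∈ (e : Sym2 V), v ∈ K}ᶜ := rfl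
      have h1 := Set.ncard_add_ncard_compl {e : G.edgeSet | ∀ v ∈ (e : Sym2 V), v ∈ K}
      rw [aux_clique_card G k K hK, Nat.card_coe_set_eq, hm] at h1
      rw [heq]; omega
    rw [hXeq]
    rw [Set.ncard_union_eq ?d1 ?f1 ?f2, Set.ncard_union_eq ?d2 ?f3 ?f4]
    case d1 =>
      rw [Set.disjoint_left]
      rintro x (h | ⟨v, hv, rfl⟩) ⟨e, he, hex⟩
      · rw [h] at hex; exact absurd hex (by simp)
      · exact absurd hex (by simp)
    case d2 =>
      rw [Set.disjoint_left]
      rintro x h ⟨v, hv, rfl⟩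
      rw [Set.mem_singleton_iff] at h
      exact absurd h (by simp)
    all_goals try exact Set.toFinite _
    rw [hBcard, hCcard, Set.ncard_singleton]
    omega
  have heq : vb (terminalCutGraph G) X = {x | ∃ v ∈ K, x = Sum.inr (Sum.inl v)} := by
    ext x
    constructor
    · rintro ⟨hnx, u, hu, hadj⟩
      rw [terminalCutGraph, fromRel_adj] at hadj
      obtain ⟨hne, hrel⟩ := hadj
      match x with
      | Sum.inl () => exact absurd (Or.inl rfl) hnx
      | Sum.inr (Sum.inl v) =>
        by_cases hv : v ∈ K
        · exact ⟨v, hv, rfl⟩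
        · exact absurd (Or.inr (Or.inl ⟨v, rfl, hv⟩)) hnx
      | Sum.inr (Sum.inr e) =>
        exfalso
        have hall : ∀ v ∈ (e : Sym2 V), v ∈ K := by
          by_contra h
          exact hnx (Or.inr (Or.inr ⟨e, rfl, h⟩))
        match u with
        | Sum.inl () => rcases hrel with h | h <;> exact h
        | Sum.inr (Sum.inl w) =>
          have hw : w ∈ (e : Sym2 V) := by rcases hrel with h | h; exact h; exact h.elim
          have hwK : w ∈ K := hall w hw
          rcases (hXmem _).mp hu with h | ⟨v', hv', hvK⟩ | ⟨e', he', _⟩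
          · exact absurd h (by simp)
          · rw [Sum.inr.injEq, Sum.inl.injEq] at hv'; exact hvK (hv' ▸ hwK)
          · exact absurd he' (by simp)
        | Sum.inr (Sum.inr e') => rcases hrel with h | h <;> exact h
    · rintro ⟨v, hv, rfl⟩
      refine ⟨?_, Sum.inl (), Or.inl rfl, ?_⟩
      · rintro (h | ⟨v', hv', hvK⟩ | ⟨e', he', _⟩)
        · exact absurd h (by simp)
        · rw [Sum.inr.injEq, Sum.inl.injEq] at hv'; exact hvK (hv' ▸ hv)
        · exact absurd he' (by simp)
      · rw [terminalCutGraph, fromRel_adj]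
        exact ⟨by simp, Or.inl trivial⟩
  refine ⟨Or.inl rfl, hcard, heq, ?_⟩
  rw [heq]
  have himg : {x : Unit ⊕ V ⊕ G.edgeSet | ∃ v ∈ K, x = Sum.inr (Sum.inl v)} =
      (fun v => Sum.inr (Sum.inl v)) '' (↑K : Set V) := by
    ext x; constructor
    · rintro ⟨v, hv, rfl⟩; exact ⟨v, hv, rfl⟩
    · rintro ⟨v, hv, rfl⟩; exact ⟨v, hv, rfl⟩
  rw [himg, Set.ncard_image_of_injective _ (fun a b h => by simpa using h),
    Set.ncard_coe_finset, hK.2]
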